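/- In type D_4, where the simple roots are α_1 = 2ω_1 − ω_2, α_2 = −ω_1 + 2ω_2 − ω_3 − ω_4, α_3 = −ω_2 + 2ω_3, and α_4 = −ω_2 + 2ω_4, the level sets satisfy: Λ₁ = {0, ω_1, ω_3, ω_4} and Λ₂ = {ω_2, ω_1 + ω_3, ω_1 + ω_4, ω_3 + ω_4}. -/

import Mathlib

namespace WeightLevelsD4

/-- The simple roots of `D₄` in the basis of fundamental dominant weights:
`α₁ = 2ω₁ - ω₂`, `α₂ = -ω₁ + 2ω₂ - ω₃ - ω₄`, `α₃ = -ω₂ + 2ω₃`, `α₄ = -ω₂ + 2ω₄`. -/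
def alpha : Fin 4 → Fin 4 → ℤ :=
  ![![2, -1, 0, 0], ![-1, 2, -1, -1], ![0, -1, 2, 0], ![0, -1, 0, 2]]

/-- A weight is dominant if all its coordinates (in the fundamental weight basis) are `≥ 0`. -/
def dominant (l : Fin 4 → ℤ) : Prop := ∀ i, 0 ≤ l i

/-- `prec μ λ` means `μ ≺ λ`: `μ ≠ λ` and `λ - μ` is an `ℕ`-linear combination of the
simple roots. -/
def prec (μ l : Fin 4 → ℤ) : Prop :=
  μ ≠ l ∧ ∃ c : Fin 4 → ℕ, l = μ + ∑ i, (c i : ℤ) • alpha i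

/-- `cum i` is the union `Λ₁ ∪ ⋯ ∪ Λ_i` of the first `i` level sets. -/
def cum : ℕ → Set (Fin 4 → ℤ)
  | 0 => ∅
  | i + 1 => cum i ∪
      {l | dominant l ∧ l ∉ cum i ∧ ∀ ν, dominant ν → prec ν l → ν ∈ cum i}

/-- `level i` is the set `Λ_i` of weights of level `i` (for `i ≥ 1`). -/
def level (i : ℕ) : Set (Fin 4 → ℤ) :=
  {l | dominant l ∧ l ∉ cum (i - 1) ∧ ∀ ν, dominant ν → prec ν l → ν ∈ cum (i - 1)}

/-!
Write `λ - ν = ∑ cᵢ αᵢ` with `c ∈ ℕ⁴`. If `λ` is small (in `Λ₁` or `Λ₂`) and `ν` is dominant,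
the coordinates of this equation force `c` to be small, which pins down all dominant `ν ≺ λ`.
Conversely, every other dominant `λ` has a dominant `ν ≺ λ` obtained by subtracting a short sum of
simple roots: the highest root `θ = α₁ + 2α₂ + α₃ + α₄ = ω₂`, a single `αᵢ` when `λ` has a
coefficient `≥ 2` at the end node `i`, or `α₂` together with a neighbouring `αᵢ`; outside `Λ₂` this
`ν` can be chosen outside `Λ₁`.
-/

def rootSum (c : Fin 4 → ℕ) : Fin 4 → ℤ :=
  ![2 * (c 0 : ℤ) - c 1, -(c 0 : ℤ) + 2 * c 1 - c 2 - c 3, -(c 1 : ℤ) + 2 * c 2,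
    -(c 1 : ℤ) + 2 * c 3]

lemma sum_smul_alpha (c : Fin 4 → ℕ) : ∑ i, (c i : ℤ) • alpha i = rootSum c := by
  ext i
  fin_cases i <;> simp [rootSum, alpha, Fin.sum_univ_four] <;> ring

lemma coeff_ne_zero {c : Fin 4 → ℕ} (hc : c ≠ 0) : c 0 ≠ 0 ∨ c 1 ≠ 0 ∨ c 2 ≠ 0 ∨ c 3 ≠ 0 := by
  by_contra! h
  exact hc (funext fun i => by fin_cases i <;> simp [h])

lemma rootSum_eq_zero_iff {c : Fin 4 → ℕ} : rootSum c = 0 ↔ c = 0 := by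
  refine ⟨fun h => ?_, fun h => by simp [h, rootSum]⟩
  by_contra hc
  have h₀ := congrFun h 0
  have h₁ := congrFun h 1
  have h₂ := congrFun h 2
  have h₃ := congrFun h 3
  simp only [rootSum, Pi.zero_apply, Matrix.cons_val_zero, Matrix.cons_val_one,
    Matrix.cons_val] at h₀ h₁ h₂ h₃
  have := coeff_ne_zero hc
  omega

lemma prec_iff {ν l : Fin 4 → ℤ} : prec ν l ↔ ∃ c ≠ 0, l = ν + rootSum c := by
  simp only [prec, sum_smul_alpha]
  constructor
  · rintro ⟨hne, c, rfl⟩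
    exact ⟨c, fun hc => hne (by rw [rootSum_eq_zero_iff.2 hc, add_zero]), rfl⟩
  · rintro ⟨c, hc, rfl⟩
    exact ⟨by simpa [← rootSum_eq_zero_iff] using hc, c, rfl⟩

lemma prec_sub_rootSum (l : Fin 4 → ℤ) {c : Fin 4 → ℕ} (hc : c ≠ 0) :
    prec (l - rootSum c) l :=
  prec_iff.2 ⟨c, hc, (sub_add_cancel l _).symm⟩

lemma dominant_iff {l : Fin 4 → ℤ} :
    dominant l ↔ 0 ≤ l 0 ∧ 0 ≤ l 1 ∧ 0 ≤ l 2 ∧ 0 ≤ l 3 := by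
  simp [dominant, Fin.forall_fin_succ]

lemma level_one_eq_setOf :
    level 1 = {l | dominant l ∧ ∀ ν, dominant ν → ¬prec ν l} := by
  ext l
  simp [level, cum]

lemma cum_one : cum 1 = level 1 :=
  Set.empty_union _

lemma level_two_eq_setOf : level 2 =
    {l | dominant l ∧ l ∉ level 1 ∧ ∀ ν, dominant ν → prec ν l → ν ∈ level 1} := by
  rw [← cum_one]
  rfl

def Λ₁ : Set (Fin 4 → ℤ) := {0, ![1, 0, 0, 0], ![0, 0, 1, 0], ![0, 0, 0, 1]}

def Λ₂ : Set (Fin 4 → ℤ) := {![0, 1, 0, 0], ![1, 0, 1, 0], ![1, 0, 0, 1], ![0, 0, 1, 1]}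

lemma mem_Λ₁_iff {l : Fin 4 → ℤ} : l ∈ Λ₁ ↔
    (l 0 = 0 ∧ l 1 = 0 ∧ l 2 = 0 ∧ l 3 = 0) ∨ (l 0 = 1 ∧ l 1 = 0 ∧ l 2 = 0 ∧ l 3 = 0) ∨
    (l 0 = 0 ∧ l 1 = 0 ∧ l 2 = 1 ∧ l 3 = 0) ∨ (l 0 = 0 ∧ l 1 = 0 ∧ l 2 = 0 ∧ l 3 = 1) := by
  simp [Λ₁, funext_iff, Fin.forall_fin_succ]

lemma mem_Λ₂_iff {l : Fin 4 → ℤ} : l ∈ Λ₂ ↔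
    (l 0 = 0 ∧ l 1 = 1 ∧ l 2 = 0 ∧ l 3 = 0) ∨ (l 0 = 1 ∧ l 1 = 0 ∧ l 2 = 1 ∧ l 3 = 0) ∨
    (l 0 = 1 ∧ l 1 = 0 ∧ l 2 = 0 ∧ l 3 = 1) ∨ (l 0 = 0 ∧ l 1 = 0 ∧ l 2 = 1 ∧ l 3 = 1) := by
  simp [Λ₂, funext_iff, Fin.forall_fin_succ]

lemma dominant_of_mem_Λ₁ {l : Fin 4 → ℤ} (hl : l ∈ Λ₁) : dominant l := by
  rw [mem_Λ₁_iff] at hl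
  rw [dominant_iff]
  omega

lemma dominant_of_mem_Λ₂ {l : Fin 4 → ℤ} (hl : l ∈ Λ₂) : dominant l := by
  rw [mem_Λ₂_iff] at hl
  rw [dominant_iff]
  omega

lemma disjoint_Λ₁_Λ₂ : Disjoint Λ₁ Λ₂ := by
  refine Set.disjoint_left.2 fun l h₁ h₂ => ?_
  rw [mem_Λ₁_iff] at h₁
  rw [mem_Λ₂_iff] at h₂
  omega

lemma not_prec_of_mem_Λ₁ {ν l : Fin 4 → ℤ} (hl : l ∈ Λ₁) (hν : dominant ν) : ¬prec ν l := by
  intro hp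
  obtain ⟨c, hc, rfl⟩ := prec_iff.1 hp
  have := coeff_ne_zero hc
  simp only [mem_Λ₁_iff, Pi.add_apply, rootSum, Matrix.cons_val_zero, Matrix.cons_val_one,
    Matrix.cons_val] at hl
  rw [dominant_iff] at hν
  rcases hl with h | h | h | h <;> omega

lemma mem_Λ₁_of_prec_of_mem_Λ₂ {ν l : Fin 4 → ℤ} (hl : l ∈ Λ₂) (hν : dominant ν)
    (hp : prec ν l) : ν ∈ Λ₁ := by
  obtain ⟨c, hc, rfl⟩ := prec_iff.1 hp
  have := coeff_ne_zero hc
  simp only [mem_Λ₂_iff, Pi.add_apply, rootSum, Matrix.cons_val_zero, Matrix.cons_val_one,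
    Matrix.cons_val] at hl
  rw [dominant_iff] at hν
  rw [mem_Λ₁_iff]
  rcases hl with h | h | h | h <;> omega

lemma exists_dominant_prec_of_mem_Λ₂ {l : Fin 4 → ℤ} (hl : l ∈ Λ₂) :
    ∃ ν, dominant ν ∧ prec ν l := by
  suffices ∃ c ≠ 0, dominant (l - rootSum c) from
    let ⟨c, hc, hν⟩ := this
    ⟨_, hν, prec_sub_rootSum l hc⟩
  rcases hl with rfl | rfl | rfl | rfl
  exacts [⟨![1, 2, 1, 1], by decide, dominant_iff.2 (by decide)⟩,
    ⟨![1, 1, 1, 0], by decide, dominant_iff.2 (by decide)⟩,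
    ⟨![1, 1, 0, 1], by decide, dominant_iff.2 (by decide)⟩,
    ⟨![0, 1, 1, 1], by decide, dominant_iff.2 (by decide)⟩]

lemma exists_dominant_prec_not_mem_Λ₁ {l : Fin 4 → ℤ} (hl : dominant l) (h₁ : l ∉ Λ₁)
    (h₂ : l ∉ Λ₂) : ∃ ν, dominant ν ∧ prec ν l ∧ ν ∉ Λ₁ := by
  suffices ∃ a b c d : ℕ, ![a, b, c, d] ≠ 0 ∧ dominant (l - rootSum ![a, b, c, d]) ∧
      l - rootSum ![a, b, c, d] ∉ Λ₁ from
    let ⟨_, _, _, _, hc, hν, hν₁⟩ := this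
    ⟨_, hν, prec_sub_rootSum l hc, hν₁⟩
  simp only [dominant_iff, mem_Λ₁_iff, mem_Λ₂_iff, Pi.sub_apply, rootSum, Matrix.cons_val_zero,
    Matrix.cons_val_one, Matrix.cons_val] at hl h₁ h₂ ⊢
  by_cases h1 : 1 ≤ l 1
  · by_cases h0 : 1 ≤ l 0
    · exact ⟨1, 1, 0, 0, by decide, by omega⟩
    by_cases h2 : 1 ≤ l 2
    · exact ⟨0, 1, 1, 0, by decide, by omega⟩
    by_cases h3 : 1 ≤ l 3
    · exact ⟨0, 1, 0, 1, by decide, by omega⟩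
    · exact ⟨1, 2, 1, 1, by decide, by omega⟩
  · by_cases h0 : 2 ≤ l 0
    · exact ⟨1, 0, 0, 0, by decide, by omega⟩
    by_cases h2 : 2 ≤ l 2
    · exact ⟨0, 0, 1, 0, by decide, by omega⟩
    by_cases h3 : 2 ≤ l 3
    · exact ⟨0, 0, 0, 1, by decide, by omega⟩
    · exact ⟨1, 1, 1, 0, by decide, by omega⟩

lemma level_one_eq_Λ₁ : level 1 = Λ₁ := by
  ext l
  rw [level_one_eq_setOf]
  refine ⟨fun ⟨hl, hmin⟩ => ?_, fun hl => ⟨dominant_of_mem_Λ₁ hl, fun ν => not_prec_of_mem_Λ₁ hl⟩⟩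
  by_contra h₁
  obtain ⟨ν, hν, hp⟩ : ∃ ν, dominant ν ∧ prec ν l := by
    by_cases h₂ : l ∈ Λ₂
    · exact exists_dominant_prec_of_mem_Λ₂ h₂
    · obtain ⟨ν, hν, hp, -⟩ := exists_dominant_prec_not_mem_Λ₁ hl h₁ h₂
      exact ⟨ν, hν, hp⟩
  exact hmin ν hν hp

lemma level_two_eq_Λ₂ : level 2 = Λ₂ := by
  ext l
  rw [level_two_eq_setOf, level_one_eq_Λ₁]
  refine ⟨fun ⟨hl, h₁, hpred⟩ => ?_, fun hl => ⟨dominant_of_mem_Λ₂ hl,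
    disjoint_Λ₁_Λ₂.notMem_of_mem_right hl, fun ν hν => mem_Λ₁_of_prec_of_mem_Λ₂ hl hν⟩⟩
  by_contra h₂
  obtain ⟨ν, hν, hp, hν₁⟩ := exists_dominant_prec_not_mem_Λ₁ hl h₁ h₂
  exact hν₁ (hpred ν hν hp)

/-- **Lemma 5.2, row `D₄`.** In type `D₄`:
`Λ₁ = {0, ω₁, ω₃, ω₄}` and `Λ₂ = {ω₂, ω₁ + ω₃, ω₁ + ω₄, ω₃ + ω₄}`. -/
theorem levels_D4 :
    level 1 = {0, ![1, 0, 0, 0], ![0, 0, 1, 0], ![0, 0, 0, 1]} ∧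
    level 2 = {![0, 1, 0, 0], ![1, 0, 1, 0], ![1, 0, 0, 1], ![0, 0, 1, 1]} :=
  ⟨level_one_eq_Λ₁, level_two_eq_Λ₂⟩

end WeightLevelsD4
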